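/- Let T : ℝ → ℝ² be polygonal with vertex times t₀ < t₁ < ... < t_n, let s > 0, and let x, y satisfy t₀ ≤ x ≤ y ≤ t_n. Suppose some tᵢ lies in [x,y]; let u be the least tᵢ ≥ x and v the greatest tᵢ ≤ y. Then H_s(T,[x,y]) ≤ max( H_s(T,[u,v]), D₋(u) + D₊(u), D₋(v) + D₊(v), max_i H_s(T,[max(x,tᵢ), min(y,tᵢ₊₁)]) ), where D₋, D₊ are taken with respect to [x,y] and the last maximum ranges over indices i with max(x,tᵢ) ≤ min(y,tᵢ₊₁). In particular, the hotspot weight of a general time window is at most the largest of: the hotspot weight of the window clipped to vertex times, twice the best square-contained duration ending/starting at u, twice that at v, and the hotspot weight within any single edge. -/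

import Mathlib

open Set

/-- `r` is an axis-parallel square of side `s`, i.e. `[p, p+s] × [q, q+s]`. -/
def IsAPSquare (s : ℝ) (r : Set (ℝ × ℝ)) : Prop :=
  ∃ p q : ℝ, r = Icc p (p + s) ×ˢ Icc q (q + s)

/-- The weight of a region `r` with respect to the trajectory `T` and the
time window `[u, v]`: the supremum of durations `d - c` of subtrajectories
`T_{cd}` (with `u ≤ c ≤ d ≤ v`) contained in `r`. -/
noncomputable def weight (T : ℝ → ℝ × ℝ) (u v : ℝ) (r : Set (ℝ × ℝ)) : ℝ :=
  sSup { w : ℝ | ∃ c d : ℝ, u ≤ c ∧ c ≤ d ∧ d ≤ v ∧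
    (∀ τ ∈ Icc c d, T τ ∈ r) ∧ w = d - c }

/-- The hotspot weight `H_s(T, [u, v])`: the supremum of the weights of all
axis-parallel squares of side `s` with respect to `T` and `[u, v]`. -/
noncomputable def hotspotWeight (s : ℝ) (T : ℝ → ℝ × ℝ) (u v : ℝ) : ℝ :=
  sSup { w : ℝ | ∃ r : Set (ℝ × ℝ), IsAPSquare s r ∧ w = weight T u v r }

/-- `D₋(t)` with respect to the window starting at `u`: the supremum of
durations `t - c` with `u ≤ c ≤ t` such that `T_{ct}` is contained in some
axis-parallel square of side `s`. -/
noncomputable def Dminus (s : ℝ) (T : ℝ → ℝ × ℝ) (u t : ℝ) : ℝ :=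
  sSup { w : ℝ | ∃ c : ℝ, u ≤ c ∧ c ≤ t ∧
    (∃ r : Set (ℝ × ℝ), IsAPSquare s r ∧ ∀ τ ∈ Icc c t, T τ ∈ r) ∧ w = t - c }

/-- `D₊(t)` with respect to the window ending at `v`: the supremum of
durations `d - t` with `t ≤ d ≤ v` such that `T_{td}` is contained in some
axis-parallel square of side `s`. -/
noncomputable def Dplus (s : ℝ) (T : ℝ → ℝ × ℝ) (v t : ℝ) : ℝ :=
  sSup { w : ℝ | ∃ d : ℝ, t ≤ d ∧ d ≤ v ∧
    (∃ r : Set (ℝ × ℝ), IsAPSquare s r ∧ ∀ τ ∈ Icc t d, T τ ∈ r) ∧ w = d - t }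

/-!
Cut a subtrajectory `T_{cd}` lying in a square at the vertex times `u` and `v`. If it avoids
both, it lies in `[u, v]` or in one of the two partial edges `[x, u]`, `[v, y]`; otherwise it
straddles `u` (or `v`), and its two halves are counted by `D₋` and `D₊` at that vertex.
The partial edges are genuine edges because `u` and `v` are the vertex times nearest the window.
-/

section Weights

variable {s : ℝ} {T : ℝ → ℝ × ℝ} {a b c d : ℝ} {r : Set (ℝ × ℝ)}

lemma weight_nonneg (T : ℝ → ℝ × ℝ) (a b : ℝ) (r : Set (ℝ × ℝ)) : 0 ≤ weight T a b r :=
  Real.sSup_nonneg (by rintro w ⟨c, d, -, hcd, -, -, rfl⟩; linarith)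

lemma weight_le_max (T : ℝ → ℝ × ℝ) (a b : ℝ) (r : Set (ℝ × ℝ)) :
    weight T a b r ≤ max 0 (b - a) :=
  Real.sSup_le (by rintro w ⟨c, d, hac, -, hdb, -, rfl⟩; exact le_max_of_le_right (by linarith))
    (le_max_left _ _)

lemma sub_le_weight (hac : a ≤ c) (hcd : c ≤ d) (hdb : d ≤ b) (hT : ∀ τ ∈ Icc c d, T τ ∈ r) :
    d - c ≤ weight T a b r :=
  le_csSup ⟨b - a, by rintro w ⟨c', d', hac', -, hdb', -, rfl⟩; linarith⟩
    ⟨c, d, hac, hcd, hdb, hT, rfl⟩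

lemma weight_le_hotspotWeight (hr : IsAPSquare s r) : weight T a b r ≤ hotspotWeight s T a b :=
  le_csSup ⟨max 0 (b - a), by rintro w ⟨r', -, rfl⟩; exact weight_le_max T a b r'⟩ ⟨r, hr, rfl⟩

lemma hotspotWeight_nonneg (s : ℝ) (T : ℝ → ℝ × ℝ) (a b : ℝ) : 0 ≤ hotspotWeight s T a b :=
  (weight_nonneg T a b _).trans (weight_le_hotspotWeight (r := Icc 0 (0 + s) ×ˢ Icc 0 (0 + s))
    ⟨0, 0, rfl⟩)

lemma sub_le_hotspotWeight (hr : IsAPSquare s r) (hac : a ≤ c) (hcd : c ≤ d) (hdb : d ≤ b)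
    (hT : ∀ τ ∈ Icc c d, T τ ∈ r) : d - c ≤ hotspotWeight s T a b :=
  (sub_le_weight hac hcd hdb hT).trans (weight_le_hotspotWeight hr)

lemma hotspotWeight_le_of_forall_sub_le {M : ℝ} (hM : 0 ≤ M)
    (h : ∀ r, IsAPSquare s r → ∀ c d, a ≤ c → c ≤ d → d ≤ b →
      (∀ τ ∈ Icc c d, T τ ∈ r) → d - c ≤ M) :
    hotspotWeight s T a b ≤ M :=
  Real.sSup_le (by
    rintro w ⟨r, hr, rfl⟩
    exact Real.sSup_le (by rintro w ⟨c, d, hac, hcd, hdb, hT, rfl⟩; exact h r hr c d hac hcd hdb hT)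
      hM) hM

lemma sub_le_Dminus_add_Dplus {m : ℝ} (hr : IsAPSquare s r) (hac : a ≤ c) (hcm : c ≤ m)
    (hmd : m ≤ d) (hdb : d ≤ b) (hT : ∀ τ ∈ Icc c d, T τ ∈ r) :
    d - c ≤ Dminus s T a m + Dplus s T b m := by
  have hminus : m - c ≤ Dminus s T a m :=
    le_csSup ⟨m - a, by rintro w ⟨c', hac', -, -, rfl⟩; linarith⟩
      ⟨c, hac, hcm, ⟨r, hr, fun τ hτ => hT τ ⟨hτ.1, hτ.2.trans hmd⟩⟩, rfl⟩
  have hplus : d - m ≤ Dplus s T b m :=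
    le_csSup ⟨b - m, by rintro w ⟨d', -, hdb', -, rfl⟩; linarith⟩
      ⟨d, hmd, hdb, ⟨r, hr, fun τ hτ => hT τ ⟨hcm.trans hτ.1, hτ.2⟩⟩, rfl⟩
  linarith

end Weights

section Edges

variable {n : ℕ} {t : Fin (n + 1) → ℝ} {s : ℝ} {T : ℝ → ℝ × ℝ} {x y u v c d : ℝ}
  {r : Set (ℝ × ℝ)}

def edgeWindowHotspotWeights (s : ℝ) (T : ℝ → ℝ × ℝ) (t : Fin (n + 1) → ℝ) (x y : ℝ) :
    Set ℝ :=
  { w : ℝ | ∃ i : Fin n, max x (t i.castSucc) ≤ min y (t i.succ) ∧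
    w = hotspotWeight s T (max x (t i.castSucc)) (min y (t i.succ)) }

lemma sSup_edgeWindowHotspotWeights_nonneg :
    0 ≤ sSup (edgeWindowHotspotWeights s T t x y) :=
  Real.sSup_nonneg (by rintro w ⟨i, -, rfl⟩; exact hotspotWeight_nonneg ..)

lemma hotspotWeight_le_sSup_edgeWindowHotspotWeights (i : Fin n)
    (hi : max x (t i.castSucc) ≤ min y (t i.succ)) :
    hotspotWeight s T (max x (t i.castSucc)) (min y (t i.succ)) ≤
      sSup (edgeWindowHotspotWeights s T t x y) :=
  le_csSup ((finite_range fun i : Fin n =>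
      hotspotWeight s T (max x (t i.castSucc)) (min y (t i.succ))).subset
      (by rintro w ⟨i, -, rfl⟩; exact ⟨i, rfl⟩)).bddAbove ⟨i, hi, rfl⟩

lemma exists_edge_of_isLeast (ht : StrictMono t) (hx : t 0 ≤ x)
    (hu : IsLeast { z : ℝ | (∃ i : Fin (n + 1), z = t i) ∧ x ≤ z } u) (hxu : x < u) :
    ∃ j : Fin n, t j.castSucc ≤ x ∧ t j.succ = u := by
  obtain ⟨⟨⟨i, rfl⟩, -⟩, hleast⟩ := hu
  obtain ⟨j, rfl⟩ := (Fin.exists_succ_eq (x := i)).mpr (by rintro rfl; exact hx.not_gt hxu)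
  refine ⟨j, ?_, rfl⟩
  by_contra! hxj
  exact (ht j.castSucc_lt_succ).not_ge (hleast ⟨⟨_, rfl⟩, hxj.le⟩)

lemma exists_edge_of_isGreatest (ht : StrictMono t) (hy : y ≤ t (Fin.last n))
    (hv : IsGreatest { z : ℝ | (∃ i : Fin (n + 1), z = t i) ∧ z ≤ y } v) (hvy : v < y) :
    ∃ j : Fin n, t j.castSucc = v ∧ y ≤ t j.succ := by
  obtain ⟨⟨⟨i, rfl⟩, -⟩, hgreatest⟩ := hv
  obtain ⟨j, rfl⟩ := (Fin.exists_castSucc_eq (i := i)).mpr (by rintro rfl; exact hy.not_gt hvy)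
  refine ⟨j, rfl, ?_⟩
  by_contra! hjy
  exact (ht j.castSucc_lt_succ).not_ge (hgreatest ⟨⟨_, rfl⟩, hjy.le⟩)

lemma sub_le_sSup_edgeWindowHotspotWeights_of_le_least (ht : StrictMono t) (hx : t 0 ≤ x)
    (hu : IsLeast { z : ℝ | (∃ i : Fin (n + 1), z = t i) ∧ x ≤ z } u) (huy : u ≤ y)
    (hr : IsAPSquare s r) (hxc : x ≤ c) (hcd : c ≤ d) (hdu : d ≤ u)
    (hT : ∀ τ ∈ Icc c d, T τ ∈ r) :
    d - c ≤ sSup (edgeWindowHotspotWeights s T t x y) := by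
  rcases (hxc.trans hcd |>.trans hdu).eq_or_lt with rfl | hxu
  · exact (sub_nonpos.2 (hdu.trans hxc)).trans sSup_edgeWindowHotspotWeights_nonneg
  obtain ⟨j, hjx, rfl⟩ := exists_edge_of_isLeast ht hx hu hxu
  have hlo : max x (t j.castSucc) = x := max_eq_left hjx
  have hhi : min y (t j.succ) = t j.succ := min_eq_right huy
  have hj := hotspotWeight_le_sSup_edgeWindowHotspotWeights (s := s) (T := T) j
    (by rw [hlo, hhi]; exact hxu.le)
  rw [hlo, hhi] at hj
  exact (sub_le_hotspotWeight hr hxc hcd hdu hT).trans hj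

lemma sub_le_sSup_edgeWindowHotspotWeights_of_greatest_le (ht : StrictMono t)
    (hy : y ≤ t (Fin.last n))
    (hv : IsGreatest { z : ℝ | (∃ i : Fin (n + 1), z = t i) ∧ z ≤ y } v) (hxv : x ≤ v)
    (hr : IsAPSquare s r) (hvc : v ≤ c) (hcd : c ≤ d) (hdy : d ≤ y)
    (hT : ∀ τ ∈ Icc c d, T τ ∈ r) :
    d - c ≤ sSup (edgeWindowHotspotWeights s T t x y) := by
  rcases (hvc.trans hcd |>.trans hdy).eq_or_lt with rfl | hvy
  · exact (sub_nonpos.2 (hdy.trans hvc)).trans sSup_edgeWindowHotspotWeights_nonneg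
  obtain ⟨j, rfl, hjy⟩ := exists_edge_of_isGreatest ht hy hv hvy
  have hlo : max x (t j.castSucc) = t j.castSucc := max_eq_right hxv
  have hhi : min y (t j.succ) = y := min_eq_left hjy
  have hj := hotspotWeight_le_sSup_edgeWindowHotspotWeights (s := s) (T := T) j
    (by rw [hlo, hhi]; exact hvy.le)
  rw [hlo, hhi] at hj
  exact (sub_le_hotspotWeight hr hvc hcd hdy hT).trans hj

end Edges

theorem general_window_hotspotWeight_le_general (n : ℕ) (t : Fin (n + 1) → ℝ)
    (ht : StrictMono t) (T : ℝ → ℝ × ℝ) (s : ℝ)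
    (x y : ℝ) (hx : t 0 ≤ x) (hy : y ≤ t (Fin.last n))
    (hex : ∃ i : Fin (n + 1), t i ∈ Icc x y)
    (u v : ℝ)
    (hu : IsLeast { z : ℝ | (∃ i : Fin (n + 1), z = t i) ∧ x ≤ z } u)
    (hv : IsGreatest { z : ℝ | (∃ i : Fin (n + 1), z = t i) ∧ z ≤ y } v) :
    hotspotWeight s T x y ≤
      max (max (hotspotWeight s T u v)
            (max (Dminus s T x u + Dplus s T y u)
              (Dminus s T x v + Dplus s T y v)))
        (sSup { w : ℝ | ∃ i : Fin n,
            max x (t i.castSucc) ≤ min y (t i.succ) ∧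
            w = hotspotWeight s T (max x (t i.castSucc)) (min y (t i.succ)) }) := by
  obtain ⟨i, hxi, hiy⟩ := hex
  have huv : u ≤ v := (hu.2 ⟨⟨i, rfl⟩, hxi⟩).trans (hv.2 ⟨⟨i, rfl⟩, hiy⟩)
  refine hotspotWeight_le_of_forall_sub_le
    (le_max_of_le_left (le_max_of_le_left (hotspotWeight_nonneg s T u v)))
    fun r hr c d hxc hcd hdy hT => ?_
  rcases le_or_gt d u with hdu | hud
  · exact le_max_of_le_right (sub_le_sSup_edgeWindowHotspotWeights_of_le_least ht hx hu
      (huv.trans hv.1.2) hr hxc hcd hdu hT)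
  rcases le_or_gt c u with hcu | huc
  · exact le_max_of_le_left <| le_max_of_le_right <| le_max_of_le_left <|
      sub_le_Dminus_add_Dplus hr hxc hcu hud.le hdy hT
  rcases le_or_gt d v with hdv | hvd
  · exact le_max_of_le_left <| le_max_of_le_left <| sub_le_hotspotWeight hr huc.le hcd hdv hT
  rcases le_or_gt c v with hcv | hvc
  · exact le_max_of_le_left <| le_max_of_le_right <| le_max_of_le_right <|
      sub_le_Dminus_add_Dplus hr hxc hcv hvd.le hdy hT
  · exact le_max_of_le_right (sub_le_sSup_edgeWindowHotspotWeights_of_greatest_le ht hy hv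
      (hu.1.2.trans huv) hr hvc.le hcd hdy hT)

/-- For a polygonal trajectory, a general window `[x, y]`
containing some vertex time, with `u` the least vertex time `≥ x` and `v` the
greatest vertex time `≤ y`: the hotspot weight of `[x, y]` is at most the
largest of (1) the hotspot weight of the window clipped to vertex times
`[u, v]`, (2) `D₋(u) + D₊(u)`, (3) `D₋(v) + D₊(v)` (with `D₋`, `D₊` taken
with respect to `[x, y]`), and (4) the hotspot weight within any single edge
clipped to the window. -/
theorem general_window_hotspotWeight_le (n : ℕ) (t : Fin (n + 1) → ℝ)
    (ht : StrictMono t) (T : ℝ → ℝ × ℝ) (s : ℝ) (hs : 0 < s)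
    (hcont : ContinuousOn T (Icc (t 0) (t (Fin.last n))))
    (haff : ∀ i : Fin n, ∃ A V : ℝ × ℝ,
      ∀ τ ∈ Icc (t i.castSucc) (t i.succ), T τ = A + τ • V)
    (x y : ℝ) (hx : t 0 ≤ x) (hxy : x ≤ y) (hy : y ≤ t (Fin.last n))
    (hex : ∃ i : Fin (n + 1), t i ∈ Icc x y)
    (u v : ℝ)
    (hu : IsLeast { z : ℝ | (∃ i : Fin (n + 1), z = t i) ∧ x ≤ z } u)
    (hv : IsGreatest { z : ℝ | (∃ i : Fin (n + 1), z = t i) ∧ z ≤ y } v) :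
    hotspotWeight s T x y ≤
      max (max (hotspotWeight s T u v)
            (max (Dminus s T x u + Dplus s T y u)
              (Dminus s T x v + Dplus s T y v)))
        (sSup { w : ℝ | ∃ i : Fin n,
            max x (t i.castSucc) ≤ min y (t i.succ) ∧
            w = hotspotWeight s T (max x (t i.castSucc)) (min y (t i.succ)) }) :=
  general_window_hotspotWeight_le_general n t ht T s x y hx hy hex u v hu hv
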